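/- Let n ≥ 2, m ≥ 3, and let p : ℤ/mℤ → ℝⁿ be a family of pairwise distinct points. For any family q : ℤ/mℤ → ℝⁿ of pairwise distinct points define the discrete cross ratios g_{ij}(q) = ‖q_j − q_i‖‖q_{j+1} − q_{i+1}‖/(‖q_{i+1} − q_i‖‖q_{j+1} − q_j‖) and the discrete energies E₁ᵐ(q) = Σ_{i≠j} (1/g_{ij}(q))·(1 + ½ΔᵢΔⱼg_{ij}(q)), E₂ᵐ(q) = −Σ_{i≠j} (1/(2g_{ij}(q)))·( (ΔᵢΔⱼg_{ij}(q))·2g_{ij}(q) − (Δᵢg_{ij}(q))(Δⱼg_{ij}(q)) + 1 ), Eᵐ(q) = E₁ᵐ(q) + E₂ᵐ(q) + 4, the sums running over ordered pairs (i,j) of distinct residues mod m. If T(x) = c + R²(x − c)/‖x − c‖² is the inversion in a sphere with center c ∉ {p₁,…,p_m} and radius R > 0, then E₁ᵐ(T∘p) = E₁ᵐ(p), E₂ᵐ(T∘p) = E₂ᵐ(p), and Eᵐ(T∘p) = Eᵐ(p). -/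

import Mathlib

open MeasureTheory Real
open scoped BigOperators

noncomputable section

/-- Discrete cross ratio `g_{ij}(q) = ‖q_j − q_i‖‖q_{j+1} − q_{i+1}‖ /
(‖q_{i+1} − q_i‖‖q_{j+1} − q_j‖)` of a closed polygon `q`. -/
def gijZ {n m : ℕ} (q : ZMod m → EuclideanSpace ℝ (Fin n)) (i j : ZMod m) : ℝ :=
  ‖q j - q i‖ * ‖q (j + 1) - q (i + 1)‖ / (‖q (i + 1) - q i‖ * ‖q (j + 1) - q j‖)

/-- Difference operator in the first index. -/
def dIZ {m : ℕ} (u : ZMod m → ZMod m → ℝ) (i j : ZMod m) : ℝ := u (i + 1) j - u i j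

/-- Difference operator in the second index. -/
def dJZ {m : ℕ} (u : ZMod m → ZMod m → ℝ) (i j : ZMod m) : ℝ := u i (j + 1) - u i j

/-- The discrete energy `E₁ᵐ`. -/
def discE1 {n m : ℕ} [NeZero m] (q : ZMod m → EuclideanSpace ℝ (Fin n)) : ℝ :=
  ∑ i : ZMod m, ∑ j : ZMod m,
    if i = j then 0 else
      (1 / gijZ q i j) * (1 + (1 / 2) * dIZ (dJZ (gijZ q)) i j)

/-- The discrete energy `E₂ᵐ`. -/
def discE2 {n m : ℕ} [NeZero m] (q : ZMod m → EuclideanSpace ℝ (Fin n)) : ℝ :=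
  - ∑ i : ZMod m, ∑ j : ZMod m,
    if i = j then 0 else
      (1 / (2 * gijZ q i j)) *
        (dIZ (dJZ (gijZ q)) i j * (2 * gijZ q i j)
          - dIZ (gijZ q) i j * dJZ (gijZ q) i j + 1)

/-- The discrete Möbius energy `Eᵐ = E₁ᵐ + E₂ᵐ + 4`. -/
def discE {n m : ℕ} [NeZero m] (q : ZMod m → EuclideanSpace ℝ (Fin n)) : ℝ :=
  discE1 q + discE2 q + 4

/-!
The cross ratio `g_{ij}` is a quotient of two products of four edge or diagonal lengths in which
every vertex `q_i, q_{i+1}, q_j, q_{j+1}` occurs once in the numerator and once in the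
denominator. An inversion multiplies `‖x - y‖` by `R / ‖x - c‖ * (R / ‖y - c‖)`, so these
conformal factors cancel and `g_{ij}(T ∘ p) = g_{ij}(p)` for all `i, j`. The energies depend on
the polygon only through its cross ratios.
-/

theorem gijZ_eq_of_norm_sub_eq_mul {n m : ℕ} {q q' : ZMod m → EuclideanSpace ℝ (Fin n)}
    (w : ZMod m → ℝ) (hw : ∀ i, w i ≠ 0)
    (hq : ∀ a b, ‖q' a - q' b‖ = w a * w b * ‖q a - q b‖) : gijZ q' = gijZ q := by
  funext i j
  have hscale : w i * w (i + 1) * w j * w (j + 1) ≠ 0 :=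
    mul_ne_zero (mul_ne_zero (mul_ne_zero (hw i) (hw (i + 1))) (hw j)) (hw (j + 1))
  calc gijZ q' i j
      = (w i * w (i + 1) * w j * w (j + 1) * (‖q j - q i‖ * ‖q (j + 1) - q (i + 1)‖)) /
          (w i * w (i + 1) * w j * w (j + 1) * (‖q (i + 1) - q i‖ * ‖q (j + 1) - q j‖)) := by
        simp only [gijZ, hq]; ring_nf
    _ = gijZ q i j := mul_div_mul_left _ _ hscale

theorem norm_inversion_sub_inversion {n : ℕ} {c x y : EuclideanSpace ℝ (Fin n)}
    (hx : x ≠ c) (hy : y ≠ c) (R : ℝ) :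
    ‖EuclideanGeometry.inversion c R x - EuclideanGeometry.inversion c R y‖ =
      R / ‖x - c‖ * (R / ‖y - c‖) * ‖x - y‖ := by
  rw [← dist_eq_norm, EuclideanGeometry.dist_inversion_inversion hx hy, dist_eq_norm,
    dist_eq_norm, dist_eq_norm]
  ring

theorem inversion_eq_add_smul {n : ℕ} (c x : EuclideanSpace ℝ (Fin n)) (R : ℝ) :
    EuclideanGeometry.inversion c R x = c + (R ^ 2 / ‖x - c‖ ^ 2) • (x - c) := by
  rw [EuclideanGeometry.inversion, dist_eq_norm, div_pow, vsub_eq_sub, vadd_eq_add, add_comm]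

theorem gijZ_inversion_comp {n m : ℕ} {p : ZMod m → EuclideanSpace ℝ (Fin n)}
    {c : EuclideanSpace ℝ (Fin n)} {R : ℝ} (hR : R ≠ 0) (hc : ∀ i, p i ≠ c) :
    gijZ (EuclideanGeometry.inversion c R ∘ p) = gijZ p :=
  gijZ_eq_of_norm_sub_eq_mul (fun i => R / ‖p i - c‖)
    (fun i => div_ne_zero hR (norm_ne_zero_iff.mpr (sub_ne_zero.mpr (hc i))))
    (fun a b => norm_inversion_sub_inversion (hc a) (hc b) R)

theorem discrete_energies_inversion_invariant
    (n m : ℕ) [NeZero m]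
    (p : ZMod m → EuclideanSpace ℝ (Fin n))
    (c : EuclideanSpace ℝ (Fin n)) (R : ℝ) (hR : 0 < R)
    (hc : ∀ i : ZMod m, p i ≠ c) :
    letI T : EuclideanSpace ℝ (Fin n) → EuclideanSpace ℝ (Fin n) :=
      fun x => c + (R ^ 2 / ‖x - c‖ ^ 2) • (x - c)
    discE1 (T ∘ p) = discE1 p ∧ discE2 (T ∘ p) = discE2 p ∧ discE (T ∘ p) = discE p := by
  have hT : (fun x => c + (R ^ 2 / ‖x - c‖ ^ 2) • (x - c)) = EuclideanGeometry.inversion c R :=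
    funext fun x => (inversion_eq_add_smul c x R).symm
  have hg := gijZ_inversion_comp hR.ne' hc
  simp only [hT, discE, discE1, discE2, dIZ, dJZ, hg, and_self]
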